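/- For all x ∈ [0,1], 0 ≤ I₀(x)/I₀(1) − (1 − (1 − x²)/4) ≤ 0.0399, where I₀ is the modified Bessel function of the first kind of order 0. -/

import Mathlib

/-- The modified Bessel function of the first kind of order zero. -/
noncomputable def besselI0 (x : ℝ) : ℝ := ∑' k : ℕ, (x / 2) ^ (2 * k) / ((Nat.factorial k : ℝ)) ^ 2

/-! With `y = x²`, `I₀(x) = ∑ aₖ yᵏ` for `aₖ = 1 / (4ᵏ (k!)²)`, and `I₀(1) = ∑ aₖ`.
Bernoulli's inequality `yᵏ ≥ 1 - k (1 - y)` together with `k aₖ ≤ aₖ₋₁ / 4` gives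
`I₀(x) ≥ (1 - (1 - y) / 4) I₀(1)`, which is the lower bound. For the upper bound, `yᵏ ≤ y` for
`k ≥ 1` gives `I₀(x) ≤ 1 + y (I₀(1) - 1)`, a chord of slope `I₀(1) - 1`; comparing it with
`I₀(1) (1 - (1 - y) / 4 + 0.0399)` at `y = 0` needs only `I₀(1) ≥ 1 + 1/4 + 1/64 + 1/2304`. -/

open Finset

section PowerSeries

variable {a : ℕ → ℝ} {y : ℝ}

theorem summable_mul_pow_of_nonneg (ha : ∀ k, 0 ≤ a k) (hs : Summable a) (hy0 : 0 ≤ y)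
    (hy1 : y ≤ 1) : Summable fun k => a k * y ^ k :=
  hs.of_nonneg_of_le (fun k => mul_nonneg (ha k) (pow_nonneg hy0 k))
    fun k => mul_le_of_le_one_right (ha k) (pow_le_one₀ hy0 hy1)

theorem tsum_mul_pow_le (ha : ∀ k, 0 ≤ a k) (hs : Summable a) (hy0 : 0 ≤ y) (hy1 : y ≤ 1) :
    ∑' k, a k * y ^ k ≤ a 0 + y * (∑' k, a k - a 0) := by
  have hs' : Summable fun k => a (k + 1) := (summable_nat_add_iff 1).mpr hs
  have hsy := (summable_nat_add_iff 1).mpr (summable_mul_pow_of_nonneg ha hs hy0 hy1)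
  have hterm (k : ℕ) : a (k + 1) * y ^ (k + 1) ≤ y * a (k + 1) := by
    rw [mul_comm y]
    exact mul_le_mul_of_nonneg_left (pow_le_of_le_one hy0 hy1 k.succ_ne_zero) (ha _)
  calc ∑' k, a k * y ^ k = a 0 + ∑' k, a (k + 1) * y ^ (k + 1) := by
        rw [(summable_mul_pow_of_nonneg ha hs hy0 hy1).tsum_eq_zero_add, pow_zero, mul_one]
    _ ≤ a 0 + ∑' k, y * a (k + 1) := by
        grw [hsy.tsum_le_tsum hterm (hs'.mul_left y)]
    _ = a 0 + y * (∑' k, a k - a 0) := by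
        rw [tsum_mul_left, hs.tsum_eq_zero_add, add_sub_cancel_left]

theorem le_tsum_mul_pow_of_succ_mul_le (ha : ∀ k, 0 ≤ a k) (hs : Summable a) (hy0 : 0 ≤ y)
    (hy1 : y ≤ 1) {c : ℝ} (hc : ∀ k, (k + 1) * a (k + 1) ≤ c * a k) :
    (1 - c * (1 - y)) * ∑' k, a k ≤ ∑' k, a k * y ^ k := by
  have hs' : Summable fun k => a (k + 1) := (summable_nat_add_iff 1).mpr hs
  have hsy := (summable_nat_add_iff 1).mpr (summable_mul_pow_of_nonneg ha hs hy0 hy1)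
  have hterm (k : ℕ) : a (k + 1) - (1 - y) * c * a k ≤ a (k + 1) * y ^ (k + 1) := by
    have bernoulli : 1 - (k + 1) * (1 - y) ≤ y ^ (k + 1) := by
      have := one_add_mul_le_pow (a := y - 1) (by linarith) (k + 1)
      rw [add_sub_cancel] at this
      push_cast at this
      linarith
    nlinarith [mul_le_mul_of_nonneg_left bernoulli (ha (k + 1)), hc k]
  calc (1 - c * (1 - y)) * ∑' k, a k
      = a 0 + ∑' k, (a (k + 1) - (1 - y) * c * a k) := by
        rw [hs'.tsum_sub (hs.mul_left _), tsum_mul_left, hs.tsum_eq_zero_add]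
        ring
    _ ≤ a 0 + ∑' k, a (k + 1) * y ^ (k + 1) := by
        grw [(hs'.sub (hs.mul_left _)).tsum_le_tsum hterm hsy]
    _ = ∑' k, a k * y ^ k := by
        rw [(summable_mul_pow_of_nonneg ha hs hy0 hy1).tsum_eq_zero_add, pow_zero, mul_one]

end PowerSeries

noncomputable def besselI0Coeff (k : ℕ) : ℝ := (1 / 4) ^ k / (k.factorial : ℝ) ^ 2

theorem besselI0Coeff_zero : besselI0Coeff 0 = 1 := by
  simp [besselI0Coeff]

theorem besselI0Coeff_nonneg (k : ℕ) : 0 ≤ besselI0Coeff k := by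
  unfold besselI0Coeff; positivity

theorem summable_besselI0Coeff : Summable besselI0Coeff :=
  (summable_geometric_of_lt_one (by norm_num) (by norm_num)).of_nonneg_of_le
    besselI0Coeff_nonneg fun k =>
      div_le_self (by positivity) (one_le_pow₀ (by exact_mod_cast k.factorial_pos))

theorem succ_mul_besselI0Coeff_succ_le (k : ℕ) :
    (k + 1) * besselI0Coeff (k + 1) ≤ 1 / 4 * besselI0Coeff k := by
  have hk : (1 : ℝ) ≤ k + 1 := by linarith [k.cast_nonneg (α := ℝ)]
  have : (k + 1) * besselI0Coeff (k + 1) = 1 / 4 * besselI0Coeff k / (k + 1) := by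
    unfold besselI0Coeff
    rw [Nat.factorial_succ]
    push_cast
    field_simp
    ring
  rw [this]
  exact div_le_self (mul_nonneg (by norm_num) (besselI0Coeff_nonneg k)) hk

theorem besselI0_eq_tsum (x : ℝ) : besselI0 x = ∑' k, besselI0Coeff k * (x ^ 2) ^ k := by
  unfold besselI0 besselI0Coeff
  congr 1
  ext k
  rw [pow_mul]
  ring

theorem besselI0_one_eq_tsum : besselI0 1 = ∑' k, besselI0Coeff k := by
  simp [besselI0_eq_tsum]

theorem le_besselI0_one : (2917 / 2304 : ℝ) ≤ besselI0 1 := by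
  rw [besselI0_one_eq_tsum]
  refine le_trans (le_of_eq ?_) (summable_besselI0Coeff.sum_le_tsum (range 4)
    fun k _ => besselI0Coeff_nonneg k)
  norm_num [sum_range_succ, besselI0Coeff, Nat.factorial]

/-- For x ∈ [0,1], 0 ≤ I₀(x)/I₀(1) − (1 − (1 − x²)/4) ≤ 0.0399. -/
theorem first_order_error_bound (x : ℝ) (hx : x ∈ Set.Icc (0 : ℝ) 1) :
    0 ≤ besselI0 x / besselI0 1 - (1 - (1 - x ^ 2) / 4) ∧
      besselI0 x / besselI0 1 - (1 - (1 - x ^ 2) / 4) ≤ 0.0399 := by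
  obtain ⟨hx0, hx1⟩ := hx
  have hy0 : 0 ≤ x ^ 2 := sq_nonneg x
  have hy1 : x ^ 2 ≤ 1 := pow_le_one₀ hx0 hx1
  have hC := le_besselI0_one
  have hlower : (1 - (1 - x ^ 2) / 4) * besselI0 1 ≤ besselI0 x := by
    have := le_tsum_mul_pow_of_succ_mul_le besselI0Coeff_nonneg summable_besselI0Coeff hy0 hy1
      succ_mul_besselI0Coeff_succ_le
    rw [← besselI0_eq_tsum, ← besselI0_one_eq_tsum] at this
    linarith
  have hupper : besselI0 x ≤ 1 + x ^ 2 * (besselI0 1 - 1) := by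
    have := tsum_mul_pow_le besselI0Coeff_nonneg summable_besselI0Coeff hy0 hy1
    rwa [← besselI0_eq_tsum, ← besselI0_one_eq_tsum, besselI0Coeff_zero] at this
  have hC0 : 0 < besselI0 1 := by linarith
  constructor
  · rw [sub_nonneg, le_div_iff₀ hC0]
    linarith
  · rw [sub_le_iff_le_add', div_le_iff₀ hC0]
    nlinarith
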